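/- Let v_b, v_c ∈ V(P) with v_b strictly preceding v_c on P, let v_f ∈ V(P) \ {s}, and let Q be an s–v_c departing path avoiding v_f whose branching vertex is v_b and whose prefix from s to v_b equals the sub-path of P from s to v_b. Then: (i) dist_P(v_b, v_c) ≤ w(Q) − dist_P(s, v_b); and (ii) for every x ∈ V(P) \ {v_b, v_c}, the graph G − x contains a path from v_b to v_c of length w(Q) − dist_P(s, v_b). -/

import Mathlib

open scoped ENNReal

/-- A directed graph on vertex type `V` with real edge weights. -/
structure WDigraph (V : Type) where
  Adj : V → V → Prop
  w : V → V → ℝ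

namespace WDigraph

variable {V : Type}

/-- The weighted length of a walk, given as the list of its vertices:
the sum of the weights of consecutive pairs. -/
def len (G : WDigraph V) (l : List V) : ℝ :=
  ((l.zip l.tail).map fun p => G.w p.1 p.2).sum

/-- `l` is a (simple) path from `u` to `v` in `G`: a nonempty list of pairwise distinct
vertices, consecutively joined by edges of `G`, starting at `u` and ending at `v`. -/
def IsPathFrom (G : WDigraph V) (u v : V) (l : List V) : Prop :=
  l.Chain' G.Adj ∧ l.Nodup ∧ l.head? = some u ∧ l.getLast? = some v

/-- The distance from `u` to `v` in `G`: the minimum length of a path from `u` to `v`,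
equal to `∞` if no such path exists. -/
noncomputable def dist (G : WDigraph V) (u v : V) : ℝ≥0∞ :=
  ⨅ (l : List V) (_ : G.IsPathFrom u v l), ENNReal.ofReal (G.len l)

/-- `G − x`: the graph obtained from `G` by deleting the vertex `x`
and all edges incident to it. -/
def deleteVert (G : WDigraph V) (x : V) : WDigraph V where
  Adj a b := G.Adj a b ∧ a ≠ x ∧ b ≠ x
  w := G.w

/-- `G[Ψ(U)]`: the subgraph of `G` consisting of the edges with at least one endpoint
in `U` (and their endpoints). -/
def psiSub (G : WDigraph V) (U : Set V) : WDigraph V where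
  Adj a b := G.Adj a b ∧ (a ∈ U ∨ b ∈ U)
  w := G.w

/-- All edge weights of `G` are positive. -/
def PosWeights (G : WDigraph V) : Prop := ∀ a b, G.Adj a b → 0 < G.w a b

end WDigraph

/-- Every prefix of the path `P` (starting at `s`) is a shortest path in `G`. -/
def ShortestPrefixes {V : Type} (G : WDigraph V) (s : V) (P : List V) : Prop :=
  ∀ k < P.length, ENNReal.ofReal (G.len (P.take (k + 1))) = G.dist s (P.getD k s)
/-- `R` is a *departing* `s`–`t` path avoiding the failed vertex `v_f = P[f]`:
an `s`–`t` path in `G − P[f]` such that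
(C1) the vertices of `R` lying on `P[0, f−1]` form a prefix of `R`, and
(C2) no vertex of `R` other than possibly its last lies on `P[f+1, p−1]`. -/
def IsDeparting {V : Type} (G : WDigraph V) (P : List V) (f : ℕ) (s t : V)
    (R : List V) : Prop :=
  (G.deleteVert (P.getD f s)).IsPathFrom s t R ∧
  (∃ k, (∀ a ∈ R.take k, a ∈ P.take f) ∧ (∀ a ∈ R.drop k, a ∉ P.take f)) ∧
  (∀ a ∈ R.dropLast, a ∉ P.drop (f + 1))

/-- `R` is a *jumping* `s`–`t` path avoiding the failed vertex `v_f = P[f]`: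
an `s`–`t` path in `G − P[f]` satisfying (C1) and
(C3) some vertex of `R` other than its last lies on `P[f+1, p−1]`. -/
def IsJumping {V : Type} (G : WDigraph V) (P : List V) (f : ℕ) (s t : V)
    (R : List V) : Prop :=
  (G.deleteVert (P.getD f s)).IsPathFrom s t R ∧
  (∃ k, (∀ a ∈ R.take k, a ∈ P.take f) ∧ (∀ a ∈ R.drop k, a ∉ P.take f)) ∧
  (∃ a ∈ R.dropLast, a ∈ P.drop (f + 1))

/-- `ddist`: the minimum length of a departing `s`–`t` path avoiding `P[f]`
(`∞` if none exists). -/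
noncomputable def ddist {V : Type} (G : WDigraph V) (P : List V) (f : ℕ)
    (s t : V) : ℝ≥0∞ :=
  ⨅ (R : List V) (_ : IsDeparting G P f s t R), ENNReal.ofReal (G.len R)

/-- `jdist`: the minimum length of a jumping `s`–`t` path avoiding `P[f]`
(`∞` if none exists). -/
noncomputable def jdist {V : Type} (G : WDigraph V) (P : List V) (f : ℕ)
    (s t : V) : ℝ≥0∞ :=
  ⨅ (R : List V) (_ : IsJumping G P f s t R), ENNReal.ofReal (G.len R)

/-!
The path required in (ii) is the suffix `R = v_b :: Q'` of `Q`; its length is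
`w(Q) − dist_P(s, v_b)`. It avoids every vertex `x ≠ v_b, v_c` of `P`: a vertex of `P[0, f−1]`
because `Q'` avoids that prefix, `v_f` because `Q` runs in `G − v_f`, and a vertex of
`P[f+1, p−1]` by (C2), since only the last vertex `v_c` of `Q` may lie there.
Part (i) compares `Q` with the shortest path `P[0, c]`.
-/

namespace WDigraph

variable {V : Type} (G : WDigraph V)

@[simp]
lemma len_singleton (a : V) : G.len [a] = 0 := by
  simp [len]

@[simp]
lemma len_cons_cons (a b : V) (l : List V) :
    G.len (a :: b :: l) = G.w a b + G.len (b :: l) := by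
  simp [len]

lemma len_append_cons (A : List V) (x : V) (B : List V) :
    G.len (A ++ x :: B) = G.len (A ++ [x]) + G.len (x :: B) := by
  induction A with
  | nil => simp
  | cons a A ih =>
    cases A with
    | nil => simp
    | cons a' A =>
      simp only [List.cons_append] at ih ⊢
      rw [len_cons_cons, len_cons_cons, ih, add_assoc]

lemma len_take_add_len_drop {l : List V} {k : ℕ} (hk : k < l.length) :
    G.len (l.take (k + 1)) + G.len (l.drop k) = G.len l := by
  conv_rhs => rw [← List.take_append_drop k l, List.drop_eq_getElem_cons hk]
  rw [len_append_cons, List.take_succ_eq_append_getElem hk, List.drop_eq_getElem_cons hk]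

variable {G}

lemma len_nonneg (hw : G.PosWeights) {l : List V} (hl : l.IsChain G.Adj) : 0 ≤ G.len l := by
  induction l with
  | nil => rfl
  | cons a l ih =>
    cases l with
    | nil => simp
    | cons b l =>
      rw [List.isChain_cons_cons] at hl
      rw [len_cons_cons]
      exact add_nonneg (hw a b hl.1).le (ih hl.2)

lemma not_mem_tail_of_isChain_deleteVert {y a : V} {l : List V}
    (h : (a :: l).IsChain (G.deleteVert y).Adj) : y ∉ l := by
  induction l generalizing a with
  | nil => simp
  | cons b l ih =>
    rw [List.isChain_cons_cons] at h
    exact List.not_mem_cons_of_ne_of_not_mem h.1.2.2.symm (ih h.2)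

lemma IsPathFrom.dist_le {u v : V} {l : List V} (h : G.IsPathFrom u v l) :
    G.dist u v ≤ ENNReal.ofReal (G.len l) :=
  iInf₂_le l h

lemma IsPathFrom.of_deleteVert {x u v : V} {l : List V}
    (h : (G.deleteVert x).IsPathFrom u v l) : G.IsPathFrom u v l :=
  ⟨h.1.imp fun _ _ hab => hab.1, h.2⟩

lemma IsPathFrom.deleteVert {x u v : V} {l : List V} (h : G.IsPathFrom u v l) (hx : x ∉ l) :
    (G.deleteVert x).IsPathFrom u v l :=
  ⟨h.1.imp_of_mem_imp fun _ _ ha hb hab =>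
    ⟨hab, ne_of_mem_of_not_mem ha hx, ne_of_mem_of_not_mem hb hx⟩, h.2⟩

lemma IsPathFrom.append_cons {u v a : V} {A B : List V} (h : G.IsPathFrom u v (A ++ a :: B)) :
    G.IsPathFrom a v (a :: B) := by
  obtain ⟨hc, hn, -, hl⟩ := h
  refine ⟨hc.suffix (List.suffix_append _ _), hn.sublist (List.suffix_append _ _).sublist, rfl, ?_⟩
  rwa [List.getLast?_append_of_ne_nil _ (List.cons_ne_nil _ _)] at hl

end WDigraph

lemma List.mem_take_or_eq_getD_or_mem_drop {α : Type*} {l : List α} {x : α} (hx : x ∈ l)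
    (n : ℕ) (d : α) : x ∈ l.take n ∨ x = l.getD n d ∨ x ∈ l.drop (n + 1) := by
  rw [← List.take_append_drop n l, List.mem_append] at hx
  rcases hx with h | h
  · exact Or.inl h
  · right
    rcases lt_or_ge n l.length with hn | hn
    · rwa [List.drop_eq_getElem_cons hn, List.mem_cons, ← List.getD_eq_getElem _ d hn] at h
    · simp [List.drop_eq_nil_of_le hn] at h

section Departing

variable {V : Type} {G : WDigraph V} {P Q : List V} {f : ℕ} {s t : V}

lemma IsDeparting.eq_of_mem_drop (hQ : IsDeparting G P f s t Q) {a : V} (ha : a ∈ Q)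
    (haP : a ∈ P.drop (f + 1)) : a = t := by
  have hne : Q ≠ [] := List.ne_nil_of_mem ha
  rw [← List.dropLast_append_getLast hne, List.mem_append, List.mem_singleton] at ha
  rcases ha with ha | rfl
  · exact absurd haP (hQ.2.2 a ha)
  · exact Option.some.inj ((List.getLast?_eq_some_getLast hne).symm.trans hQ.1.2.2.2)

lemma IsDeparting.not_mem_of_eq_append (hQ : IsDeparting G P f s t Q) {A Q' : List V}
    (hQA : Q = A ++ Q') (hA : A ≠ []) (hQ' : ∀ a ∈ Q', a ∉ P.take f) {x : V} (hxP : x ∈ P)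
    (hxt : x ≠ t) : x ∉ Q' := by
  intro hx
  rcases List.mem_take_or_eq_getD_or_mem_drop hxP f s with h | rfl | h
  · exact hQ' _ hx h
  · obtain ⟨a, A', rfl⟩ := List.exists_cons_of_ne_nil hA
    have hchain := hQ.1.1
    rw [hQA, List.cons_append] at hchain
    exact WDigraph.not_mem_tail_of_isChain_deleteVert hchain (List.mem_append_right A' hx)
  · exact hxt (hQ.eq_of_mem_drop (hQA ▸ List.mem_append_right A hx) h)

end Departing

lemma ShortestPrefixes.len_take_le {V : Type} {G : WDigraph V} {s : V} {P : List V}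
    (hshort : ShortestPrefixes G s P) (hw : G.PosWeights) {c : ℕ} (hc : c < P.length)
    {Q : List V} (hQ : G.IsPathFrom s (P.getD c s) Q) : G.len (P.take (c + 1)) ≤ G.len Q :=
  (ENNReal.ofReal_le_ofReal_iff (G.len_nonneg hw hQ.1)).1 ((hshort c hc).trans_le hQ.dist_le)

theorem departing_suffix_usable_general {V : Type} (G : WDigraph V)
    (hw : G.PosWeights) (s : V) (P : List V)
    (hshort : ShortestPrefixes G s P)
    (b c f : ℕ) (hbc : b < c) (hcp : c < P.length)
    (Q Q' : List V)
    (hQ : IsDeparting G P f s (P.getD c s) Q)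
    (hdecomp : Q = P.take (b + 1) ++ Q')
    (hQ' : ∀ a ∈ Q', a ∉ P.take f) :
    G.len ((P.take (c + 1)).drop b) ≤ G.len Q - G.len (P.take (b + 1)) ∧
    ∀ x ∈ P, x ≠ P.getD b s → x ≠ P.getD c s →
      ∃ R, (G.deleteVert x).IsPathFrom (P.getD b s) (P.getD c s) R ∧
        G.len R = G.len Q - G.len (P.take (b + 1)) := by
  have htake : P.take (b + 1) = P.take b ++ [P.getD b s] := by
    rw [List.take_succ_eq_append_getElem (hbc.trans hcp), List.getD_eq_getElem]
  have hQR : Q = P.take b ++ P.getD b s :: Q' := by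
    rw [hdecomp, htake, List.append_assoc, List.singleton_append]
  have hlenQ : G.len Q = G.len (P.take (b + 1)) + G.len (P.getD b s :: Q') := by
    rw [hQR, G.len_append_cons, htake]
  have hQG : G.IsPathFrom s (P.getD c s) Q := hQ.1.of_deleteVert
  refine ⟨?_, fun x hxP hxb hxc => ⟨P.getD b s :: Q', ?_, by linarith⟩⟩
  · have hsplit := G.len_take_add_len_drop (l := P.take (c + 1)) (k := b) (by rw [List.length_take]; omega)
    rw [List.take_take, min_eq_left (by omega)] at hsplit
    linarith [hshort.len_take_le hw hcp hQG]
  · refine (hQR ▸ hQG).append_cons.deleteVert ?_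
    simp only [List.mem_cons, not_or]
    exact ⟨hxb, hQ.not_mem_of_eq_append hdecomp (by simp [htake]) hQ' hxP hxc⟩

/-- **Suffixes of departing paths are safely usable (Lemma `pisbetter`).**
`P` is a path of `G` starting at `s` all of whose prefixes are shortest paths;
`v_b = P[b]` strictly precedes `v_c = P[c]` on `P`; `v_f = P[f] ∈ V(P) \ {s}`; and
`Q = P[0,b] ++ Q'` is an `s`–`v_c` departing path avoiding `v_f` whose branching vertex
is `v_b` (so `Q'` avoids `P[0, f−1]`), i.e. whose prefix from `s` to `v_b` equals the
sub-path of `P` from `s` to `v_b`.  Then: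
(i) `dist_P(v_b, v_c) ≤ w(Q) − dist_P(s, v_b)`; and
(ii) for every `x ∈ V(P) \ {v_b, v_c}`, the graph `G − x` contains a path from `v_b`
to `v_c` of length `w(Q) − dist_P(s, v_b)`. -/
theorem departing_suffix_usable {V : Type} [Fintype V] (G : WDigraph V)
    (hw : G.PosWeights) (s : V) (P : List V)
    (hchain : P.Chain' G.Adj) (hnodup : P.Nodup) (hhead : P.head? = some s)
    (hshort : ShortestPrefixes G s P)
    (b c f : ℕ) (hbc : b < c) (hcp : c < P.length)
    (hbf : b < f) (hf1 : 1 ≤ f) (hf2 : f < P.length)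
    (Q Q' : List V)
    (hQ : IsDeparting G P f s (P.getD c s) Q)
    (hdecomp : Q = P.take (b + 1) ++ Q')
    (hQ' : ∀ a ∈ Q', a ∉ P.take f) :
    G.len ((P.take (c + 1)).drop b) ≤ G.len Q - G.len (P.take (b + 1)) ∧
    ∀ x ∈ P, x ≠ P.getD b s → x ≠ P.getD c s →
      ∃ R, (G.deleteVert x).IsPathFrom (P.getD b s) (P.getD c s) R ∧
        G.len R = G.len Q - G.len (P.take (b + 1)) :=
  departing_suffix_usable_general G hw s P hshort b c f hbc hcp Q Q' hQ hdecomp hQ'
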